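/- Let θ be a non-degenerate semi-basic 1-form on E with d(L_Sθ) = 0. Then there exists a regular Lagrangian L on E such that: (1) L_Sθ = dL; (2) θ = θ_L + (θ(S) − L) dt, i.e., θ is equivalent modulo dt to the Poincaré–Cartan 1-form θ_L; (3) the function θ(S) − L is a first integral of S, i.e., S(θ(S) − L) = 0; and (4) the 1-form i_Sdθ is a dual symmetry of S, i.e., L_S(i_Sdθ) = 0. -/

import Mathlib

noncomputable section

/-- The local model `E = ℝ × (Fin n → ℝ) × (Fin n → ℝ)` of the first jet bundle `J¹π`,
with coordinates `(t, xⁱ, yⁱ)`.  Tangent vectors at a point are identified with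
elements of `E n` itself. -/
abbrev E (n : ℕ) : Type := ℝ × (Fin n → ℝ) × (Fin n → ℝ)

variable {n : ℕ}

/-- A map between normed spaces is `C^∞`-smooth. -/
def Cinf {α β : Type*} [NormedAddCommGroup α] [NormedSpace ℝ α]
    [NormedAddCommGroup β] [NormedSpace ℝ β] (f : α → β) : Prop :=
  ContDiff ℝ (⊤ : ℕ∞) f

/-- A tangent vector having only a `y`-component. -/
def ypart (w : Fin n → ℝ) : E n := (0, 0, w)

/-- The coordinate vector `∂/∂yⁱ`. -/
def pdy (i : Fin n) : E n := ypart (Pi.single i 1)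

/-- The coordinate vector `∂/∂xⁱ`. -/
def pdx (i : Fin n) : E n := (0, Pi.single i 1, 0)

/-- Action of a vector field `X` on a function `f`: `X(f)(p) = df_p(X(p))`. -/
def vfd (X : E n → E n) (f : E n → ℝ) : E n → ℝ := fun p => fderiv ℝ f p (X p)

/-- Lie bracket of vector fields on `E n`. -/
def lieb (X Y : E n → E n) : E n → E n :=
  fun p => fderiv ℝ Y p (X p) - fderiv ℝ X p (Y p)

/-- The semispray `S = ∂/∂t + Σ yⁱ ∂/∂xⁱ − 2 Σ Gⁱ ∂/∂yⁱ` associated to `G`. -/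
def Ssp (G : E n → Fin n → ℝ) : E n → E n := fun p => (1, p.2.2, fun i => -(2 * G p i))

/-- Nonlinear connection coefficients `Nⁱⱼ = ∂Gⁱ/∂yʲ`. -/
def Nc (G : E n → Fin n → ℝ) (i j : Fin n) : E n → ℝ :=
  fun p => fderiv ℝ (fun q => G q i) p (pdy j)

/-- `Nⁱ₀ = 2Gⁱ − Σⱼ Nⁱⱼ yʲ`. -/
def N0c (G : E n → Fin n → ℝ) (i : Fin n) : E n → ℝ :=
  fun p => 2 * G p i - ∑ j, Nc G i j p * p.2.2 j

/-- The horizontal vector field `δ/δxⁱ = ∂/∂xⁱ − Σⱼ Nʲᵢ ∂/∂yʲ`. -/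
def ddx (G : E n → Fin n → ℝ) (i : Fin n) : E n → E n :=
  fun p => (0, Pi.single i 1, fun j => -(Nc G j i p))

/-- The contact 1-form `δxⁱ = dxⁱ − yⁱ dt`. -/
def dxi (i : Fin n) : E n → E n → ℝ := fun p w => w.2.1 i - p.2.2 i * w.1

/-- The 1-form `δyⁱ = dyⁱ + Σⱼ Nⁱⱼ dxʲ + Nⁱ₀ dt`. -/
def dyi (G : E n → Fin n → ℝ) (i : Fin n) : E n → E n → ℝ :=
  fun p w => w.2.2 i + (∑ j, Nc G i j p * w.2.1 j) + N0c G i p * w.1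

/-- The vertical endomorphism `J = Σᵢ ∂/∂yⁱ ⊗ δxⁱ`. -/
def Jv : E n → E n → E n := fun p w => ypart (fun i => dxi i p w)

/-- The horizontal projector `h = S ⊗ dt + Σᵢ δ/δxⁱ ⊗ δxⁱ`. -/
def hv (G : E n → Fin n → ℝ) : E n → E n → E n :=
  fun p w => w.1 • Ssp G p + ∑ i, dxi i p w • ddx G i p

/-- Jacobi endomorphism components `Rⁱⱼ = 2 ∂Gⁱ/∂xʲ − Σₖ Nⁱₖ Nᵏⱼ − S(Nⁱⱼ)`. -/
def Rjac (G : E n → Fin n → ℝ) (i j : Fin n) : E n → ℝ := fun p =>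
  2 * fderiv ℝ (fun q => G q i) p (pdx j) - (∑ k, Nc G i k p * Nc G k j p)
    - vfd (Ssp G) (Nc G i j) p

/-- Curvature components `Rⁱⱼₖ = (δ/δxᵏ)(Nⁱⱼ) − (δ/δxʲ)(Nⁱₖ)`. -/
def Rcur (G : E n → Fin n → ℝ) (i j k : Fin n) : E n → ℝ := fun p =>
  fderiv ℝ (Nc G i j) p (ddx G k p) - fderiv ℝ (Nc G i k) p (ddx G j p)

/-- The Jacobi endomorphism `Φ = Σᵢⱼ Rʲᵢ ∂/∂yʲ ⊗ δxⁱ`. -/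
def Phi (G : E n → Fin n → ℝ) : E n → E n → E n :=
  fun p w => ypart (fun j => ∑ i, Rjac G j i p * dxi i p w)

/-- The tensor `Ψ = Σᵢ δ/δxⁱ ⊗ δyⁱ − Σᵢⱼ Rʲᵢ ∂/∂yʲ ⊗ δxⁱ`. -/
def Psi (G : E n → Fin n → ℝ) : E n → E n → E n :=
  fun p w => (∑ i, dyi G i p w • ddx G i p) - Phi G p w

/-- Lie derivative of a 1-form `θ` along `X`, evaluated on a vector field `Y`:
`(L_Xθ)(Y) = X(θ(Y)) − θ([X,Y])`. -/
def lieD (X : E n → E n) (θ : E n → E n → ℝ) (Y : E n → E n) : E n → ℝ :=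
  fun p => fderiv ℝ (fun q => θ q (Y q)) p (X p) - θ p (lieb X Y p)

/-- Exterior derivative of a 1-form: `dθ(X,Y) = X(θ(Y)) − Y(θ(X)) − θ([X,Y])`. -/
def extD (θ : E n → E n → ℝ) (X Y : E n → E n) : E n → ℝ :=
  fun p => fderiv ℝ (fun q => θ q (Y q)) p (X p) - fderiv ℝ (fun q => θ q (X q)) p (Y p)
    - θ p (lieb X Y p)

/-- Exterior derivative of a 1-form given as an operator on vector fields. -/
def extDop (α : (E n → E n) → E n → ℝ) (X Y : E n → E n) : E n → ℝ :=
  fun p => fderiv ℝ (α Y) p (X p) - fderiv ℝ (α X) p (Y p) - α (lieb X Y) p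

/-- The semi-basic 1-form `θ₀ dt + Σᵢ θᵢ δxⁱ`. -/
def sbform (θ0 : E n → ℝ) (θc : Fin n → E n → ℝ) : E n → E n → ℝ :=
  fun p w => θ0 p * w.1 + ∑ i, θc i p * dxi i p w

/-- `d_Jθ(X,Y) = dθ(JX,Y) + dθ(X,JY)` for a semi-basic 1-form `θ`. -/
def dJf (θ : E n → E n → ℝ) (X Y : E n → E n) : E n → ℝ :=
  fun p => extD θ (fun q => Jv q (X q)) Y p + extD θ X (fun q => Jv q (Y q)) p

/-- `d_hθ(X,Y) = dθ(hX,Y) + dθ(X,hY) − dθ(X,Y)` for a semi-basic 1-form `θ`. -/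
def dhf (G : E n → Fin n → ℝ) (θ : E n → E n → ℝ) (X Y : E n → E n) : E n → ℝ :=
  fun p => extD θ (fun q => hv G q (X q)) Y p + extD θ X (fun q => hv G q (Y q)) p
    - extD θ X Y p

/-- `d_Φθ(X,Y) = dθ(ΦX,Y) + dθ(X,ΦY)` for a semi-basic 1-form `θ`. -/
def dPhif (G : E n → Fin n → ℝ) (θ : E n → E n → ℝ) (X Y : E n → E n) : E n → ℝ :=
  fun p => extD θ (fun q => Phi G q (X q)) Y p + extD θ X (fun q => Phi G q (Y q)) p

/-- Lie derivative of the 2-form `dθ` along a vector field `SS`: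
`(L_S dθ)(X,Y) = S(dθ(X,Y)) − dθ([S,X],Y) − dθ(X,[S,Y])`. -/
def lieD2 (SS : E n → E n) (θ : E n → E n → ℝ) (X Y : E n → E n) : E n → ℝ :=
  fun p => fderiv ℝ (extD θ X Y) p (SS p) - extD θ (lieb SS X) Y p - extD θ X (lieb SS Y) p

/-- `∇dθ = L_S(dθ) − i_Ψ(dθ)`. -/
def nabD (G : E n → Fin n → ℝ) (θ : E n → E n → ℝ) (X Y : E n → E n) : E n → ℝ :=
  fun p => lieD2 (Ssp G) θ X Y p
    - (extD θ (fun q => Psi G q (X q)) Y p + extD θ X (fun q => Psi G q (Y q)) p)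

/-- The dynamical covariant derivative of an `n`-tuple of functions:
`(∇f)ᵢ = S(fᵢ) − Σⱼ Nʲᵢ fⱼ`. -/
def covd (G : E n → Fin n → ℝ) (f : Fin n → E n → ℝ) : Fin n → E n → ℝ :=
  fun i p => vfd (Ssp G) (f i) p - ∑ j, Nc G j i p * f j p

/-- Pointwise value of `dθ` on tangent vectors, via constant vector fields. -/
def Dpt (θ : E n → E n → ℝ) (p u w : E n) : ℝ := extD θ (fun _ => u) (fun _ => w) p

/-- The 2-form `dθ + (i_S dθ)∧dt`, pointwise. -/
def Om (G : E n → Fin n → ℝ) (θ : E n → E n → ℝ) (p u w : E n) : ℝ :=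
  Dpt θ p u w + Dpt θ p (Ssp G p) u * w.1 - Dpt θ p (Ssp G p) w * u.1

/-- The coordinate basis `∂/∂t, ∂/∂xⁱ, ∂/∂yⁱ` of the tangent space. -/
def bas {n : ℕ} : Unit ⊕ Fin n ⊕ Fin n → E n :=
  Sum.elim (fun _ => ((1 : ℝ), 0, 0)) (Sum.elim pdx pdy)

/-- A semi-basic 1-form `θ` is non-degenerate if the 2-form `dθ + (i_S dθ)∧dt`
has rank `2n` at every point. -/
def nondeg (G : E n → Fin n → ℝ) (θ : E n → E n → ℝ) : Prop :=
  ∀ p : E n, (Matrix.of fun a b => Om G θ p (bas a) (bas b)).rank = 2 * n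

/-- The Hessian matrix `(∂²L/∂yⁱ∂yʲ)` of a Lagrangian `L`. -/
def Hess (L : E n → ℝ) (p : E n) : Matrix (Fin n) (Fin n) ℝ :=
  Matrix.of fun i j => fderiv ℝ (fun q => fderiv ℝ L q (pdy j)) p (pdy i)

/-- A Lagrangian is regular if its Hessian in the fibre coordinates is invertible
at every point. -/
def regular (L : E n → ℝ) : Prop := ∀ p : E n, IsUnit (Hess L p)

/-! Since `d(L_S θ) = 0`, the derivative of `L_S θ`, viewed as a map into the dual space, is
symmetric, so by the Poincaré lemma on the convex space `E` it is `dL` for a smooth `L`.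
Evaluating on `∂/∂yⁱ` gives `∂L/∂yⁱ = θᵢ`, which is (2) and makes the Hessian of `L` equal to
`(∂θⱼ/∂yⁱ)`; evaluating on `S` gives `S(L) = S(θ₀)`, which is (3) since `θ(S) = θ₀`. By Cartan's
formula `i_S dθ = L_S θ - d(θ(S)) = d(L - θ₀)`, and `L_S d(L - θ₀) = d(S(L - θ₀)) = 0` is (4). -/

open ContinuousLinearMap
open scoped Matrix

section Smooth

variable {α β : Type*} [NormedAddCommGroup α] [NormedSpace ℝ α]
  [NormedAddCommGroup β] [NormedSpace ℝ β] {f : α → β}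

lemma Cinf.differentiable (h : Cinf f) : Differentiable ℝ f :=
  ContDiff.differentiable h (by simp)

lemma Cinf.fderiv_right (h : Cinf f) : Cinf (fderiv ℝ f) :=
  ContDiff.fderiv_right h (by exact_mod_cast le_top)

lemma Cinf.contDiff_two (h : Cinf f) : ContDiff ℝ 2 f :=
  ContDiff.of_le h (WithTop.coe_le_coe.2 le_top)

end Smooth

theorem Matrix.rank_add_le_card_of_mulVec_eq_zero {m ι K : Type*} [Fintype ι] [Field K]
    {k : ℕ} (M : Matrix m ι K) {v : Fin k → ι → K} (hv : LinearIndependent K v)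
    (hker : ∀ i, M *ᵥ v i = 0) : M.rank + k ≤ Fintype.card ι := by
  have hspan : Submodule.span K (Set.range v) ≤ LinearMap.ker M.mulVecLin := by
    rw [Submodule.span_le]
    rintro _ ⟨i, rfl⟩
    exact hker i
  have hk := Submodule.finrank_mono hspan
  rw [finrank_span_eq_card hv, Fintype.card_fin] at hk
  have hrk := LinearMap.finrank_range_add_finrank_ker M.mulVecLin
  rw [Module.finrank_fintype_fun_eq_card] at hrk
  unfold Matrix.rank
  omega

lemma fderiv_clm_apply_const {V W : Type*} [NormedAddCommGroup V] [NormedSpace ℝ V]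
    [NormedAddCommGroup W] [NormedSpace ℝ W] {A : V → V →L[ℝ] W} {p : V}
    (hA : DifferentiableAt ℝ A p) (u w : V) :
    fderiv ℝ (fun q => A q w) p u = fderiv ℝ A p u w := by
  rw [fderiv_clm_apply hA (differentiableAt_const w)]
  simp

section Coordinates

def coords (w : E n) : Unit ⊕ Fin n ⊕ Fin n → ℝ := Sum.elim (fun _ => w.1) (Sum.elim w.2.1 w.2.2)

lemma sum_coords_smul_bas (w : E n) : ∑ b, coords w b • bas b = w := by
  ext <;> simp [Fintype.sum_sum_type, coords, bas, pdx, pdy, ypart, Prod.fst_sum, Prod.snd_sum,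
    Finset.sum_apply, Pi.single_apply]

lemma ypart_eq_sum (v : Fin n → ℝ) : ypart v = ∑ i, v i • pdy i := by
  ext <;> simp [pdy, ypart, Prod.fst_sum, Prod.snd_sum, Finset.sum_apply, Pi.single_apply]

end Coordinates

section LieDerivative

def lieDL (S : E n → E n) (A : E n → E n →L[ℝ] ℝ) (p : E n) : E n →L[ℝ] ℝ :=
  fderiv ℝ A p (S p) + (A p).comp (fderiv ℝ S p)

variable {S X : E n → E n} {A : E n → E n →L[ℝ] ℝ} {p : E n}

lemma lieb_const (u w : E n) : lieb (fun _ => u) (fun _ => w) = fun _ => 0 := by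
  funext p
  simp [lieb]

lemma lieD_eq_lieDL (hA : DifferentiableAt ℝ A p) (hX : DifferentiableAt ℝ X p) :
    lieD S (fun q => A q) X p = lieDL S A p (X p) := by
  simp only [lieD, lieb, lieDL, fderiv_clm_apply hA hX, map_sub, add_apply, comp_apply,
    flip_apply]
  ring

lemma cinf_lieDL (hS : Cinf S) (hA : Cinf A) : Cinf (lieDL S A) :=
  (hA.fderiv_right.clm_apply hS).add (hA.clm_comp hS.fderiv_right)

lemma cinf_lieb (hS : Cinf S) (hX : Cinf X) : Cinf (lieb S X) :=
  (hX.fderiv_right.clm_apply hS).sub (hS.fderiv_right.clm_apply hX)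

lemma lieD_const (hA : Differentiable ℝ A) (u : E n) :
    lieD S (fun q => A q) (fun _ => u) = fun q => lieDL S A q u :=
  funext fun _ => lieD_eq_lieDL (hA _) (differentiableAt_const u)

/-- Closedness of `L_S θ`, tested on constant vector fields, is the symmetry of its derivative. -/
lemma fderiv_lieDL_symm (hS : Cinf S) (hA : Cinf A)
    (hcl : ∀ X Y : E n → E n, Cinf X → Cinf Y → ∀ p : E n,
      extDop (lieD S (fun q => A q)) X Y p = 0) (p u w : E n) :
    fderiv ℝ (lieDL S A) p u w = fderiv ℝ (lieDL S A) p w u := by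
  have hα := (cinf_lieDL hS hA).differentiable p
  have h := hcl (fun _ => u) (fun _ => w) contDiff_const contDiff_const p
  simp only [extDop, lieb_const, lieD_const hA.differentiable, map_zero, sub_zero] at h
  rw [← fderiv_clm_apply_const hα, ← fderiv_clm_apply_const hα]
  linarith

theorem exists_fderiv_eq_lieDL (hS : Cinf S) (hA : Cinf A)
    (hcl : ∀ X Y : E n → E n, Cinf X → Cinf Y → ∀ p : E n,
      extDop (lieD S (fun q => A q)) X Y p = 0) :
    ∃ L : E n → ℝ, Cinf L ∧ ∀ p, fderiv ℝ L p = lieDL S A p := by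
  obtain ⟨L, hL⟩ := convex_univ.exists_forall_hasFDerivAt_of_fderiv_symmetric isOpen_univ
    (cinf_lieDL hS hA).differentiable.differentiableOn
    fun p _ u w => fderiv_lieDL_symm hS hA hcl p u w
  have hfd : fderiv ℝ L = lieDL S A := funext fun p => (hL p trivial).fderiv
  refine ⟨L, ?_, fun p => congrFun hfd p⟩
  rw [Cinf, contDiff_infty_iff_fderiv, hfd]
  exact ⟨fun p => (hL p trivial).differentiableAt, cinf_lieDL hS hA⟩

lemma lieDL_apply_self (hA : DifferentiableAt ℝ A p) (hS : DifferentiableAt ℝ S p) :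
    lieDL S A p (S p) = fderiv ℝ (fun q => A q (S q)) p (S p) := by
  rw [← lieD_eq_lieDL hA hS]
  simp [lieD, lieb]

lemma extD_eq_lieD_sub (θ : E n → E n → ℝ) (S X : E n → E n) (p : E n) :
    extD θ S X p = lieD S θ X p - fderiv ℝ (fun q => θ q (S q)) p (X p) := by
  simp only [extD, lieD]
  ring

/-- `L_S (df) = d (S f)`, which vanishes when `f` is a first integral of `S`. -/
lemma lieD_fderiv_eq_zero {f : E n → ℝ} (hf : ContDiff ℝ 2 f) (hS : DifferentiableAt ℝ S p)
    (hX : DifferentiableAt ℝ X p) (hSf : ∀ q, fderiv ℝ f q (S q) = 0) :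
    lieD S (fun q => fderiv ℝ f q) X p = 0 := by
  have hdf : DifferentiableAt ℝ (fderiv ℝ f) p :=
    (hf.fderiv_right (m := 1) (by norm_num)).differentiable one_ne_zero p
  have hSf' : fderiv ℝ (fun q => fderiv ℝ f q (S q)) p (X p) = 0 := by
    simp [hSf]
  rw [fderiv_clm_apply hdf hS] at hSf'
  have hsymm := (hf.contDiffAt (x := p)).isSymmSndFDerivAt (by simp) (X p) (S p)
  rw [lieD_eq_lieDL hdf hX]
  simp only [lieDL, add_apply, comp_apply, flip_apply] at hSf' ⊢
  linarith

end LieDerivative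

section SemiBasic

variable {G : E n → Fin n → ℝ} {θ0 : E n → ℝ} {θc : Fin n → E n → ℝ} {p : E n}

lemma cinf_ssp (hG : Cinf G) : Cinf (Ssp G) := by
  have hGi : ∀ i, Cinf fun p => G p i := contDiff_pi.1 hG
  unfold Cinf Ssp at *
  fun_prop

lemma fderiv_ssp_apply (hG : DifferentiableAt ℝ G p) (w : E n) :
    fderiv ℝ (Ssp G) p w = (0, w.2.2, -(2 : ℝ) • fderiv ℝ G p w) := by
  have hS : Ssp G = fun q => ((1 : ℝ), q.2.2, -(2 : ℝ) • G q) := by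
    funext q
    refine Prod.ext rfl (Prod.ext rfl ?_)
    funext i
    simp [Ssp]
  have hd : HasFDerivAt (Ssp G)
      ((0 : E n →L[ℝ] ℝ).prod (((snd ℝ _ _).comp (snd ℝ ℝ _)).prod (-(2 : ℝ) • fderiv ℝ G p)))
      p := by
    rw [hS]
    exact (hasFDerivAt_const _ _).prodMk
      (((snd ℝ _ _).comp (snd ℝ ℝ _)).hasFDerivAt.prodMk (hG.hasFDerivAt.fun_const_smul _))
  simp [hd.fderiv]

lemma sbform_ssp (p : E n) : sbform θ0 θc p (Ssp G p) = θ0 p := by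
  simp [sbform, Ssp, dxi]

def sbformL (θ0 : E n → ℝ) (θc : Fin n → E n → ℝ) (p : E n) : E n →L[ℝ] ℝ :=
  θ0 p • fst ℝ ℝ _ + ∑ i, θc i p •
    ((proj (R := ℝ) (φ := fun _ : Fin n => ℝ) i).comp ((fst ℝ _ _).comp (snd ℝ ℝ _))
      - p.2.2 i • fst ℝ ℝ _)

lemma sbform_eq_sbformL : sbform θ0 θc = fun p => ⇑(sbformL θ0 θc p) := by
  funext p w
  simp [sbformL, sbform, dxi, mul_comm]

lemma cinf_sbformL (h0 : Cinf θ0) (hc : ∀ i, Cinf (θc i)) : Cinf (sbformL θ0 θc) := by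
  unfold Cinf _root_.sbformL at *
  fun_prop


lemma sbformL_ypart (p : E n) (v : Fin n → ℝ) : sbformL θ0 θc p (ypart v) = 0 := by
  simp [sbformL, ypart]

lemma sbformL_ssp (p : E n) : sbformL θ0 θc p (Ssp G p) = θ0 p := by
  simp [sbformL, Ssp]

lemma lieDL_ssp_sbformL_pdy (hG : Cinf G) (h0 : Cinf θ0) (hc : ∀ i, Cinf (θc i)) (p : E n)
    (i : Fin n) : lieDL (Ssp G) (sbformL θ0 θc) p (pdy i) = θc i p := by
  have hvert : fderiv ℝ (sbformL θ0 θc) p (Ssp G p) (pdy i) = 0 := by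
    have hzero : (fun q => sbformL θ0 θc q (pdy i)) = fun _ => 0 :=
      funext fun q => sbformL_ypart q _
    rw [← fderiv_clm_apply_const ((cinf_sbformL h0 hc).differentiable p), hzero]
    simp
  simp only [lieDL, add_apply, comp_apply, hvert, fderiv_ssp_apply (hG.differentiable p)]
  simp [sbformL, pdy, ypart, Pi.single_apply]

lemma lieDL_ssp_sbformL_ssp (hG : Cinf G) (h0 : Cinf θ0) (hc : ∀ i, Cinf (θc i)) (p : E n) :
    lieDL (Ssp G) (sbformL θ0 θc) p (Ssp G p) = fderiv ℝ θ0 p (Ssp G p) := by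
  rw [lieDL_apply_self ((cinf_sbformL h0 hc).differentiable p) ((cinf_ssp hG).differentiable p)]
  simp [sbformL_ssp]

end SemiBasic

section Nondegenerate

variable {G : E n → Fin n → ℝ} {θ0 : E n → ℝ} {θc : Fin n → E n → ℝ} {p : E n}

lemma fderiv_sbformL_apply (h0 : Cinf θ0) (hc : ∀ i, Cinf (θc i)) (p u w : E n) :
    fderiv ℝ (sbformL θ0 θc) p u w
      = (fderiv ℝ θ0 p u - ∑ i, θc i p * u.2.2 i) * w.1
        + ∑ i, fderiv ℝ (θc i) p u * dxi i p w := by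
  have hfun : (fun q => sbformL θ0 θc q w)
      = fun q => θ0 q * w.1 + ∑ i, θc i q * (w.2.1 i - q.2.2 i * w.1) := by
    funext q
    simp [sbformL]
  let yL (i : Fin n) : E n →L[ℝ] ℝ :=
    (proj (R := ℝ) (φ := fun _ : Fin n => ℝ) i).comp ((snd ℝ _ _).comp (snd ℝ ℝ _))
  have hd : HasFDerivAt (fun q => sbformL θ0 θc q w)
      (w.1 • fderiv ℝ θ0 p + ∑ i, (θc i p • (0 - w.1 • yL i)
        + (w.2.1 i - p.2.2 i * w.1) • fderiv ℝ (θc i) p)) p := by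
    rw [hfun]
    refine ((h0.differentiable p).hasFDerivAt.mul_const w.1).add
      (HasFDerivAt.fun_sum fun i _ => ((hc i).differentiable p).hasFDerivAt.mul ?_)
    exact (hasFDerivAt_const _ p).sub ((yL i).hasFDerivAt.mul_const w.1)
  rw [← fderiv_clm_apply_const ((cinf_sbformL h0 hc).differentiable p), hd.fderiv]
  simp only [add_apply, smul_apply, sum_apply, sub_apply, zero_apply, comp_apply, smul_eq_mul,
    yL, proj_apply, coe_snd', dxi]
  have hsum : ∑ i, (θc i p * (0 - w.1 * u.2.2 i) + (w.2.1 i - p.2.2 i * w.1) * fderiv ℝ (θc i) p u)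
      = ∑ i, (fderiv ℝ (θc i) p u * (w.2.1 i - p.2.2 i * w.1) - θc i p * u.2.2 i * w.1) :=
    Finset.sum_congr rfl fun i _ => by ring
  rw [hsum, Finset.sum_sub_distrib, sub_mul, Finset.sum_mul]
  ring

lemma Dpt_eq_fderiv {A : E n → E n →L[ℝ] ℝ} (hA : DifferentiableAt ℝ A p) (u w : E n) :
    Dpt (fun q => A q) p u w = fderiv ℝ A p u w - fderiv ℝ A p w u := by
  simp [Dpt, extD, lieb_const, fderiv_clm_apply_const hA]

lemma Om_apply_ssp {A : E n → E n →L[ℝ] ℝ} (hA : DifferentiableAt ℝ A p) (u : E n) :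
    Om G (fun q => A q) p u (Ssp G p) = 0 := by
  simp only [Om, Dpt_eq_fderiv hA, Ssp]
  ring

lemma exists_Om_eq_clm {A : E n → E n →L[ℝ] ℝ} (hA : DifferentiableAt ℝ A p) (u : E n) :
    ∃ ℓ : E n →L[ℝ] ℝ, ∀ w, Om G (fun q => A q) p u w = ℓ w :=
  ⟨fderiv ℝ A p u - (fderiv ℝ A p).flip u + Dpt (fun q => A q) p (Ssp G p) u • fst ℝ ℝ _
      - u.1 • (fderiv ℝ A p (Ssp G p) - (fderiv ℝ A p).flip (Ssp G p)),
    fun w => by simp [Om, Dpt_eq_fderiv hA]; ring⟩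

lemma Om_sbform_apply_ypart (h0 : Cinf θ0) (hc : ∀ i, Cinf (θc i)) {v : Fin n → ℝ}
    (hv : ∀ i, fderiv ℝ (θc i) p (ypart v) = 0) (u : E n) :
    Om G (sbform θ0 θc) p u (ypart v) = 0 := by
  rw [sbform_eq_sbformL]
  simp only [Om, Dpt_eq_fderiv ((cinf_sbformL h0 hc).differentiable p),
    fderiv_sbformL_apply h0 hc, hv]
  simp [ypart, Ssp, dxi]
  ring

lemma mulVec_coords (B : E n → E n → ℝ) (hB : ∀ u, ∃ ℓ : E n →L[ℝ] ℝ, ∀ w, B u w = ℓ w)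
    (w : E n) : (Matrix.of fun a b => B (bas a) (bas b)) *ᵥ coords w = fun a => B (bas a) w := by
  funext a
  obtain ⟨ℓ, hℓ⟩ := hB (bas a)
  conv_rhs => rw [← sum_coords_smul_bas w, hℓ, map_sum]
  simp [Matrix.mulVec, dotProduct, hℓ, mul_comm]

/-- `S` always lies in the kernel of `dθ + (i_S dθ) ∧ dt`; a vertical vector `ypart v`
annihilated by all `dθᵢ` would add a second direction, contradicting rank `2n` in
dimension `2n + 1`. -/
lemma eq_zero_of_fderiv_ypart_eq_zero (h0 : Cinf θ0) (hc : ∀ i, Cinf (θc i))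
    (hnd : nondeg G (sbform θ0 θc)) (p : E n) {v : Fin n → ℝ}
    (hv : ∀ i, fderiv ℝ (θc i) p (ypart v) = 0) : v = 0 := by
  by_contra hv0
  obtain ⟨j, hj⟩ : ∃ j, v j ≠ 0 := Function.ne_iff.mp hv0
  have hA := (cinf_sbformL h0 hc).differentiable p
  have hlin : ∀ u, ∃ ℓ : E n →L[ℝ] ℝ, ∀ w, Om G (sbform θ0 θc) p u w = ℓ w := by
    rw [sbform_eq_sbformL]
    exact exists_Om_eq_clm hA
  have hS : ∀ u, Om G (sbform θ0 θc) p u (Ssp G p) = 0 := by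
    rw [sbform_eq_sbformL]
    exact Om_apply_ssp hA
  have hli : LinearIndependent ℝ ![coords (Ssp G p), coords (ypart v)] := by
    rw [LinearIndependent.pair_iff]
    intro s t hst
    have hs : s = 0 := by simpa [coords, Ssp, ypart] using congrFun hst (Sum.inl ())
    subst hs
    simpa [coords, ypart, hj] using congrFun hst (Sum.inr (Sum.inr j))
  have hrank := Matrix.rank_add_le_card_of_mulVec_eq_zero
    (Matrix.of fun a b => Om G (sbform θ0 θc) p (bas a) (bas b)) hli fun i => by
      fin_cases i <;> dsimp <;> rw [mulVec_coords _ hlin] <;> funext a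
      · exact hS _
      · exact Om_sbform_apply_ypart h0 hc hv _
  rw [hnd p] at hrank
  simp at hrank
  omega

lemma regular_of_fderiv_pdy (h0 : Cinf θ0) (hc : ∀ i, Cinf (θc i))
    (hnd : nondeg G (sbform θ0 θc)) {L : E n → ℝ}
    (hL : ∀ q i, fderiv ℝ L q (pdy i) = θc i q) : regular L := by
  intro p
  rw [Matrix.isUnit_iff_isUnit_det, isUnit_iff_ne_zero]
  intro hdet
  obtain ⟨v, hv0, hv⟩ := Matrix.exists_vecMul_eq_zero_iff.mpr hdet
  refine hv0 (eq_zero_of_fderiv_ypart_eq_zero h0 hc hnd p fun j => ?_)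
  have hj := congrFun hv j
  simp only [Hess, hL, Matrix.vecMul, dotProduct, Matrix.of_apply] at hj
  rw [ypart_eq_sum, map_sum]
  simpa [mul_comm] using hj

end Nondegenerate

theorem stmt14_general (n : ℕ) (G : E n → Fin n → ℝ) (hG : Cinf G)
    (θ0 : E n → ℝ) (θc : Fin n → E n → ℝ) (h0 : Cinf θ0) (hc : ∀ i, Cinf (θc i))
    (hnd : nondeg G (sbform θ0 θc))
    (hcl : ∀ X Y : E n → E n, Cinf X → Cinf Y → ∀ p : E n,
      extDop (lieD (Ssp G) (sbform θ0 θc)) X Y p = 0) :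
    ∃ L : E n → ℝ, Cinf L ∧ regular L
      ∧ (∀ X : E n → E n, Cinf X → ∀ p : E n,
          lieD (Ssp G) (sbform θ0 θc) X p = fderiv ℝ L p (X p))
      ∧ (∀ (p : E n) (w : E n),
          sbform θ0 θc p w
            = sbform L (fun i q => fderiv ℝ L q (pdy i)) p w
              + (sbform θ0 θc p (Ssp G p) - L p) * w.1)
      ∧ (∀ p : E n, vfd (Ssp G) (fun q => sbform θ0 θc q (Ssp G q) - L q) p = 0)
      ∧ (∀ X : E n → E n, Cinf X → ∀ p : E n,
          fderiv ℝ (extD (sbform θ0 θc) (Ssp G) X) p (Ssp G p)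
            - extD (sbform θ0 θc) (Ssp G) (lieb (Ssp G) X) p = 0) := by
  have hA := cinf_sbformL h0 hc
  have hS := cinf_ssp hG
  rw [sbform_eq_sbformL] at hcl
  obtain ⟨L, hLsm, hdL⟩ := exists_fderiv_eq_lieDL hS hA hcl
  have hlie : ∀ X q, DifferentiableAt ℝ X q →
      lieD (Ssp G) (sbform θ0 θc) X q = fderiv ℝ L q (X q) := fun X q hX => by
    rw [sbform_eq_sbformL, lieD_eq_lieDL (hA.differentiable q) hX, hdL]
  have hLy : ∀ q i, fderiv ℝ L q (pdy i) = θc i q := fun q i => by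
    rw [hdL, lieDL_ssp_sbformL_pdy hG h0 hc]
  have hLS : ∀ q, fderiv ℝ L q (Ssp G q) = fderiv ℝ θ0 q (Ssp G q) := fun q => by
    rw [hdL, lieDL_ssp_sbformL_ssp hG h0 hc]
  have hiS : ∀ Y q, DifferentiableAt ℝ Y q →
      extD (sbform θ0 θc) (Ssp G) Y q = fderiv ℝ (fun q => L q - θ0 q) q (Y q) :=
    fun Y q hY => by
    rw [extD_eq_lieD_sub, hlie Y q hY, fderiv_fun_sub (hLsm.differentiable q)
      (h0.differentiable q), sub_apply]
    simp only [sbform_ssp]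
  refine ⟨L, hLsm, regular_of_fderiv_pdy h0 hc hnd hLy,
    fun X hX p => hlie X p (hX.differentiable p), fun p w => ?_, fun p => ?_, fun X hX p => ?_⟩
  · rw [sbform_ssp]
    simp only [sbform, hLy]
    ring
  · simp only [vfd, sbform_ssp]
    rw [fderiv_fun_sub (h0.differentiable p) (hLsm.differentiable p), sub_apply, hLS, sub_self]
  · rw [funext fun q => hiS X q (hX.differentiable q),
      hiS _ p ((cinf_lieb hS hX).differentiable p)]
    refine lieD_fderiv_eq_zero (Cinf.contDiff_two (hLsm.sub h0)) (hS.differentiable p)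
      (hX.differentiable p) fun q => ?_
    rw [fderiv_fun_sub (hLsm.differentiable q) (h0.differentiable q), sub_apply, hLS, sub_self]

/-- Let `θ = θ₀ dt + Σᵢ θᵢ δxⁱ` be a non-degenerate semi-basic
1-form on `E` with `d(L_Sθ) = 0`.  Then there exists a regular Lagrangian `L`
such that: (1) `L_Sθ = dL`; (2) `θ = θ_L + (θ(S) − L) dt`; (3) `θ(S) − L` is a
first integral of `S`; (4) the 1-form `i_S dθ` is a dual symmetry of `S`. -/
theorem stmt14 (n : ℕ) (hn : 1 ≤ n) (G : E n → Fin n → ℝ) (hG : Cinf G)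
    (θ0 : E n → ℝ) (θc : Fin n → E n → ℝ) (h0 : Cinf θ0) (hc : ∀ i, Cinf (θc i))
    (hnd : nondeg G (sbform θ0 θc))
    (hcl : ∀ X Y : E n → E n, Cinf X → Cinf Y → ∀ p : E n,
      extDop (lieD (Ssp G) (sbform θ0 θc)) X Y p = 0) :
    ∃ L : E n → ℝ, Cinf L ∧ regular L
      ∧ (∀ X : E n → E n, Cinf X → ∀ p : E n,
          lieD (Ssp G) (sbform θ0 θc) X p = fderiv ℝ L p (X p))
      ∧ (∀ (p : E n) (w : E n),
          sbform θ0 θc p w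
            = sbform L (fun i q => fderiv ℝ L q (pdy i)) p w
              + (sbform θ0 θc p (Ssp G p) - L p) * w.1)
      ∧ (∀ p : E n, vfd (Ssp G) (fun q => sbform θ0 θc q (Ssp G q) - L q) p = 0)
      ∧ (∀ X : E n → E n, Cinf X → ∀ p : E n,
          fderiv ℝ (extD (sbform θ0 θc) (Ssp G) X) p (Ssp G p)
            - extD (sbform θ0 θc) (Ssp G) (lieb (Ssp G) X) p = 0) :=
  stmt14_general n G hG θ0 θc h0 hc hnd hcl
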